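/- arXiv:1601.03370 — 3 statements merged into one kernel-verified Lean document; each statement's English description precedes it below -/
import Mathlib

section
/- In the poset of down-coerced well-formed ground terms extended with an added bottom element ⊥̲ (junior to all down-coerced terms), every pair of elements t1, t2 has a greatest lower bound t1 ⊓ t2, nil is the top element, and t1 ⊑ t2 iff t1 ⊓ t2 = t1; dually, in the poset of up-coerced well-formed ground terms extended with an added top element ⊤̄ (senior to all up-coerced terms), every pair of elements t1, t2 has a least upper bound t1 ⊔ t2, none is the bottom element, and t1 ⊑ t2 iff t1 ⊔ t2 = t2. -/
/-- MDL ground terms. -/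
inductive GTerm (σ : Type) : Type where
  | sym    : σ → GTerm σ
  | tuple  : List (GTerm σ) → GTerm σ
  | record : List (σ × GTerm σ) → GTerm σ
  | choice : List (σ × GTerm σ) → GTerm σ

/-- Well-formed ground terms: tuples are nonempty, record/choice labels are
pairwise distinct, recursively. -/
inductive WF {σ : Type} : GTerm σ → Prop where
  | sym (s : σ) : WF (.sym s)
  | tuple {ts : List (GTerm σ)} (hne : ts ≠ []) (h : ∀ t ∈ ts, WF t) :
      WF (.tuple ts)
  | record {es : List (σ × GTerm σ)} (hl : (es.map Prod.fst).Nodup)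
      (h : ∀ e ∈ es, WF e.2) : WF (.record es)
  | choice {es : List (σ × GTerm σ)} (hl : (es.map Prod.fst).Nodup)
      (h : ∀ e ∈ es, WF e.2) : WF (.choice es)

/-- The seniority relation on ground terms. -/
inductive Sen {σ : Type} : GTerm σ → GTerm σ → Prop where
  /-- none ⊑ t for every choice t -/
  | noneBot (es) : Sen (.choice []) (.choice es)
  /-- t ⊑ nil for every symbol -/
  | symNil (s) : Sen (.sym s) (.record [])
  /-- t ⊑ nil for every tuple -/
  | tupleNil (ts) : Sen (.tuple ts) (.record [])
  /-- t ⊑ nil for every record -/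
  | recordNil (es) : Sen (.record es) (.record [])
  /-- t ⊑ t -/
  | refl (t) : Sen t t
  /-- tuples: componentwise, equal length -/
  | tuple {ts1 ts2 : List (GTerm σ)} (hlen : ts1.length = ts2.length)
      (h : ∀ (i : ℕ) (h1 : i < ts1.length) (h2 : i < ts2.length),
        Sen (ts1.get ⟨i, h1⟩) (ts2.get ⟨i, h2⟩)) :
      Sen (.tuple ts1) (.tuple ts2)
  /-- records: wider record is junior; `f` picks, for each element of the
  senior record, a matching element of the junior record -/
  | record {es1 es2 : List (σ × GTerm σ)} (hlen : es2.length ≤ es1.length)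
      (f : Fin es2.length → Fin es1.length)
      (hl : ∀ j, (es1.get (f j)).1 = (es2.get j).1)
      (h : ∀ j, Sen (es1.get (f j)).2 (es2.get j).2) :
      Sen (.record es1) (.record es2)
  /-- choices: narrower choice is junior -/
  | choice {es1 es2 : List (σ × GTerm σ)} (hlen : es1.length ≤ es2.length)
      (f : Fin es1.length → Fin es2.length)
      (hl : ∀ i, (es2.get (f i)).1 = (es1.get i).1)
      (h : ∀ i, Sen (es1.get i).2 (es2.get (f i)).2) :
      Sen (.choice es1) (.choice es2)

/-- Down-coerced terms: symbols, tuples and records. -/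
def IsDown {σ : Type} : GTerm σ → Prop
  | .sym _ => True
  | .tuple _ => True
  | .record _ => True
  | .choice _ => False

/-- Up-coerced terms: choices. -/
def IsUp {σ : Type} : GTerm σ → Prop
  | .choice _ => True
  | _ => False

/-- Well-formed down-coerced ground terms. -/
def DT (σ : Type) : Type := {t : GTerm σ // WF t ∧ IsDown t}

/-- Well-formed up-coerced ground terms. -/
def UT (σ : Type) : Type := {t : GTerm σ // WF t ∧ IsUp t}

/-- Seniority on down-coerced well-formed terms extended with a bottom
element `⊥̲` (encoded as `none`), junior to all down-coerced terms. -/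
def dle {σ : Type} : Option (DT σ) → Option (DT σ) → Prop
  | none, _ => True
  | some _, none => False
  | some a, some b => Sen a.1 b.1

/-- Seniority on up-coerced well-formed terms extended with a top
element `⊤̄` (encoded as `none`), senior to all up-coerced terms. -/
def ule {σ : Type} : Option (UT σ) → Option (UT σ) → Prop
  | _, none => True
  | none, some _ => False
  | some a, some b => Sen a.1 b.1

/-- The empty record `nil`. -/
def nilD (σ : Type) : DT σ :=
  ⟨.record [], ⟨WF.record (by simp) (by simp), by simp [IsDown]⟩⟩

/-- The empty choice `none`. -/
def noneU (σ : Type) : UT σ :=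
  ⟨.choice [], ⟨WF.choice (by simp) (by simp), by simp [IsUp]⟩⟩

section Helpers
variable {σ : Type}

lemma down_le_nil {t : GTerm σ} (h : IsDown t) : Sen t (.record []) := by
  cases t with
  | sym s => exact .symNil s
  | tuple ts => exact .tupleNil ts
  | record es => exact .recordNil es
  | choice es => simp [IsDown] at h

lemma sen_down {g t : GTerm σ} (h : Sen g t) (hd : IsDown t) : IsDown g := by
  cases h <;> first | exact hd | simp [IsDown] at *

lemma sen_up {t l : GTerm σ} (h : Sen t l) (hu : IsUp t) : IsUp l := by
  cases h <;> first | exact hu | simp [IsUp] at *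

/-- `Emb es1 es2` : record es1 is junior to record es2. -/
def Emb (es1 es2 : List (σ × GTerm σ)) : Prop :=
  ∀ e ∈ es2, ∃ t, (e.1, t) ∈ es1 ∧ Sen t e.2

/-- `CEmb es1 es2` : choice es1 is junior to choice es2. -/
def CEmb (es1 es2 : List (σ × GTerm σ)) : Prop :=
  ∀ e ∈ es1, ∃ t, (e.1, t) ∈ es2 ∧ Sen e.2 t

lemma emb_of_sen {es1 es2 : List (σ × GTerm σ)}
    (h : Sen (.record es1) (.record es2)) : Emb es1 es2 := by
  cases h with
  | recordNil => intro e he; simp at he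
  | refl => intro e he; exact ⟨e.2, by simpa using he, .refl _⟩
  | record hlen f hl hs =>
    intro e he
    obtain ⟨j, hj⟩ := List.mem_iff_get.mp he
    refine ⟨(es1.get (f j)).2, ?_, by rw [← hj]; exact hs j⟩
    have hm : es1.get (f j) ∈ es1 := List.get_mem _ _
    have : (e.1, (es1.get (f j)).2) = es1.get (f j) := by
      rw [← hj, ← hl j]
    rw [this]; exact hm

lemma cemb_of_sen {es1 es2 : List (σ × GTerm σ)}
    (h : Sen (.choice es1) (.choice es2)) : CEmb es1 es2 := by
  cases h with
  | noneBot => intro e he; simp at he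
  | refl => intro e he; exact ⟨e.2, by simpa using he, .refl _⟩
  | choice hlen f hl hs =>
    intro e he
    obtain ⟨i, hi⟩ := List.mem_iff_get.mp he
    refine ⟨(es2.get (f i)).2, ?_, by rw [← hi]; exact hs i⟩
    have hm : es2.get (f i) ∈ es2 := List.get_mem _ _
    have : (e.1, (es2.get (f i)).2) = es2.get (f i) := by
      rw [← hi, ← hl i]
    rw [this]; exact hm

lemma sen_record_of_emb {es1 es2 : List (σ × GTerm σ)}
    (hnd : (es2.map Prod.fst).Nodup) (h : Emb es1 es2) :
    Sen (.record es1) (.record es2) := by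
  classical
  have hsub : es2.map Prod.fst ⊆ es1.map Prod.fst := by
    intro l hl
    obtain ⟨e, he, rfl⟩ := List.mem_map.mp hl
    obtain ⟨t, ht, _⟩ := h e he
    exact List.mem_map.mpr ⟨(e.1, t), ht, rfl⟩
  have hlen : es2.length ≤ es1.length := by
    have := (List.subperm_of_subset hnd hsub).length_le
    simpa using this
  have hch : ∀ j : Fin es2.length, ∃ i : Fin es1.length,
      (es1.get i).1 = (es2.get j).1 ∧ Sen (es1.get i).2 (es2.get j).2 := by
    intro j
    obtain ⟨t, ht, hs⟩ := h (es2.get j) (List.get_mem _ _)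
    obtain ⟨i, hi⟩ := List.mem_iff_get.mp ht
    exact ⟨i, by rw [hi], by rw [hi]; exact hs⟩
  choose f h1 h2 using hch
  exact .record hlen f h1 h2

lemma sen_choice_of_cemb {es1 es2 : List (σ × GTerm σ)}
    (hnd : (es1.map Prod.fst).Nodup) (h : CEmb es1 es2) :
    Sen (.choice es1) (.choice es2) := by
  classical
  have hsub : es1.map Prod.fst ⊆ es2.map Prod.fst := by
    intro l hl
    obtain ⟨e, he, rfl⟩ := List.mem_map.mp hl
    obtain ⟨t, ht, _⟩ := h e he
    exact List.mem_map.mpr ⟨(e.1, t), ht, rfl⟩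
  have hlen : es1.length ≤ es2.length := by
    have := (List.subperm_of_subset hnd hsub).length_le
    simpa using this
  have hch : ∀ i : Fin es1.length, ∃ j : Fin es2.length,
      (es2.get j).1 = (es1.get i).1 ∧ Sen (es1.get i).2 (es2.get j).2 := by
    intro i
    obtain ⟨t, ht, hs⟩ := h (es1.get i) (List.get_mem _ _)
    obtain ⟨j, hj⟩ := List.mem_iff_get.mp ht
    exact ⟨j, by rw [hj], by rw [hj]; exact hs⟩
  choose f h1 h2 using hch
  exact .choice hlen f h1 h2

lemma sen_sym_inv_r {z : GTerm σ} {s : σ} (h : Sen z (.sym s)) : z = .sym s := by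
  cases h; rfl

lemma sen_sym_inv_l {z : GTerm σ} {s : σ} (h : Sen (.sym s) z) :
    z = .sym s ∨ z = .record [] := by
  cases h with
  | symNil => right; rfl
  | refl => left; rfl

lemma sen_tuple_inv_r {z : GTerm σ} {ts : List (GTerm σ)} (h : Sen z (.tuple ts)) :
    ∃ ts', z = .tuple ts' ∧ List.Forall₂ Sen ts' ts := by
  cases h with
  | refl => exact ⟨ts, rfl, List.forall₂_same.mpr fun t _ => .refl t⟩
  | tuple hlen hs => exact ⟨_, rfl, List.forall₂_iff_get.mpr ⟨hlen, hs⟩⟩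

lemma sen_tuple_inv_l {z : GTerm σ} {ts : List (GTerm σ)} (h : Sen (.tuple ts) z) :
    (∃ ts', z = .tuple ts' ∧ List.Forall₂ Sen ts ts') ∨ z = .record [] := by
  cases h with
  | tupleNil => right; rfl
  | refl => exact Or.inl ⟨ts, rfl, List.forall₂_same.mpr fun t _ => .refl t⟩
  | tuple hlen hs => exact Or.inl ⟨_, rfl, List.forall₂_iff_get.mpr ⟨hlen, hs⟩⟩

lemma sen_record_inv_r {z : GTerm σ} {es : List (σ × GTerm σ)}
    (h : Sen z (.record es)) :
    (es = [] ∧ IsDown z) ∨ ∃ es', z = .record es' ∧ Emb es' es := by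
  cases h with
  | symNil => exact Or.inl ⟨rfl, by simp [IsDown]⟩
  | tupleNil => exact Or.inl ⟨rfl, by simp [IsDown]⟩
  | recordNil => exact Or.inr ⟨_, rfl, fun e he => by simp at he⟩
  | refl => exact Or.inr ⟨es, rfl, fun e he => ⟨e.2, by simpa using he, .refl _⟩⟩
  | record hlen f hl hs =>
    exact Or.inr ⟨_, rfl, emb_of_sen (.record hlen f hl hs)⟩

lemma sen_record_inv_l {es : List (σ × GTerm σ)} {z : GTerm σ}
    (h : Sen (.record es) z) : ∃ es2, z = .record es2 ∧ Emb es es2 := by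
  cases h with
  | recordNil => exact ⟨[], rfl, fun e he => by simp at he⟩
  | refl => exact ⟨es, rfl, fun e he => ⟨e.2, by simpa using he, .refl _⟩⟩
  | record hlen f hl hs =>
    exact ⟨_, rfl, emb_of_sen (.record hlen f hl hs)⟩

lemma sen_choice_inv_r {z : GTerm σ} {es : List (σ × GTerm σ)}
    (h : Sen z (.choice es)) : ∃ es1, z = .choice es1 ∧ CEmb es1 es := by
  cases h with
  | noneBot => exact ⟨[], rfl, fun e he => by simp at he⟩
  | refl => exact ⟨es, rfl, fun e he => ⟨e.2, by simpa using he, .refl _⟩⟩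
  | choice hlen f hl hs =>
    exact ⟨_, rfl, cemb_of_sen (.choice hlen f hl hs)⟩

lemma sen_choice_inv_l {es : List (σ × GTerm σ)} {z : GTerm σ}
    (h : Sen (.choice es) z) : ∃ es2, z = .choice es2 ∧ CEmb es es2 := by
  cases h with
  | noneBot => exact ⟨_, rfl, fun e he => by simp at he⟩
  | refl => exact ⟨es, rfl, fun e he => ⟨e.2, by simpa using he, .refl _⟩⟩
  | choice hlen f hl hs =>
    exact ⟨_, rfl, cemb_of_sen (.choice hlen f hl hs)⟩

lemma nodup_keys_unique {es : List (σ × GTerm σ)} (h : (es.map Prod.fst).Nodup)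
    {l : σ} {a b : GTerm σ} (ha : (l, a) ∈ es) (hb : (l, b) ∈ es) : a = b := by
  induction es with
  | nil => simp at ha
  | cons e tl ih =>
    simp only [List.map_cons, List.nodup_cons] at h
    rcases List.mem_cons.mp ha with ha' | ha' <;>
      rcases List.mem_cons.mp hb with hb' | hb'
    · rw [← ha'] at hb'; exact (Prod.mk.injEq _ _ _ _ ▸ hb').2.symm
    · exfalso; apply h.1; rw [← ha']; exact List.mem_map.mpr ⟨(l, b), hb', rfl⟩
    · exfalso; apply h.1; rw [← hb']; exact List.mem_map.mpr ⟨(l, a), ha', rfl⟩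
    · exact ih h.2 ha' hb'

lemma sizeOf_pos (t : GTerm σ) : 0 < sizeOf t := by
  cases t <;> simp <;> omega

lemma size_mem_tuple {t : GTerm σ} {ts : List (GTerm σ)} (h : t ∈ ts) :
    sizeOf t < sizeOf (GTerm.tuple ts) := by
  have := List.sizeOf_lt_of_mem h
  simp only [GTerm.tuple.sizeOf_spec]
  omega

lemma size_mem_record {e : σ × GTerm σ} {es : List (σ × GTerm σ)} (h : e ∈ es) :
    sizeOf e.2 < sizeOf (GTerm.record es) := by
  have h1 := List.sizeOf_lt_of_mem h
  obtain ⟨l, v⟩ := e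
  simp only [GTerm.record.sizeOf_spec, Prod.mk.sizeOf_spec] at h1 ⊢
  omega

lemma size_mem_choice {e : σ × GTerm σ} {es : List (σ × GTerm σ)} (h : e ∈ es) :
    sizeOf e.2 < sizeOf (GTerm.choice es) := by
  have h1 := List.sizeOf_lt_of_mem h
  obtain ⟨l, v⟩ := e
  simp only [GTerm.choice.sizeOf_spec, Prod.mk.sizeOf_spec] at h1 ⊢
  omega

lemma wf_tuple_mem {ts : List (GTerm σ)} (h : WF (.tuple ts)) {t} (ht : t ∈ ts) : WF t := by
  cases h with | tuple hne hw => exact hw t ht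

lemma wf_record_mem {es : List (σ × GTerm σ)} (h : WF (.record es)) {e} (he : e ∈ es) : WF e.2 := by
  cases h with | record hl hw => exact hw e he

lemma wf_choice_mem {es : List (σ × GTerm σ)} (h : WF (.choice es)) {e} (he : e ∈ es) : WF e.2 := by
  cases h with | choice hl hw => exact hw e he

lemma wf_record_nd {es : List (σ × GTerm σ)} (h : WF (.record es)) : (es.map Prod.fst).Nodup := by
  cases h with | record hl hw => exact hl

lemma wf_choice_nd {es : List (σ × GTerm σ)} (h : WF (.choice es)) : (es.map Prod.fst).Nodup := by
  cases h with | choice hl hw => exact hl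

end Helpers
section Core
variable {σ : Type}

/-- Greatest lower bound spec (or: no common lower bound). -/
def GS (t1 t2 : GTerm σ) : Prop :=
  (∃ g, WF g ∧ Sen g t1 ∧ Sen g t2 ∧ ∀ z, WF z → Sen z t1 → Sen z t2 → Sen z g) ∨
  (∀ z, WF z → Sen z t1 → Sen z t2 → False)

/-- Least upper bound spec (or: no common upper bound). -/
def LS (t1 t2 : GTerm σ) : Prop :=
  (∃ l, WF l ∧ Sen t1 l ∧ Sen t2 l ∧ ∀ z, WF z → Sen t1 z → Sen t2 z → Sen l z) ∨
  (∀ z, WF z → Sen t1 z → Sen t2 z → False)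

lemma GS_symm {t1 t2 : GTerm σ} (h : GS t1 t2) : GS t2 t1 := by
  rcases h with ⟨g, hw, h1, h2, hu⟩ | hr
  · exact Or.inl ⟨g, hw, h2, h1, fun z hz a b => hu z hz b a⟩
  · exact Or.inr fun z hz a b => hr z hz b a

lemma LS_symm {t1 t2 : GTerm σ} (h : LS t1 t2) : LS t2 t1 := by
  rcases h with ⟨g, hw, h1, h2, hu⟩ | hr
  · exact Or.inl ⟨g, hw, h2, h1, fun z hz a b => hu z hz b a⟩
  · exact Or.inr fun z hz a b => hr z hz b a

lemma wf_tuple_ne {ts : List (GTerm σ)} (h : WF (.tuple ts)) : ts ≠ [] := by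
  cases h with | tuple hne _ => exact hne

lemma forall₂_get_of {R : GTerm σ → GTerm σ → Prop} {l1 l2 : List (GTerm σ)}
    (h : List.Forall₂ R l1 l2) (i : ℕ) (h1 : i < l1.length) (h2 : i < l2.length) :
    R (l1.get ⟨i, h1⟩) (l2.get ⟨i, h2⟩) :=
  (List.forall₂_iff_get.mp h).2 i h1 h2

lemma GS_tuple_tuple {ts1 ts2 : List (GTerm σ)} (h1 : WF (.tuple ts1))
    (h2 : WF (.tuple ts2)) (IH : ∀ p ∈ ts1.zip ts2, GS p.1 p.2) :
    GS (.tuple ts1) (.tuple ts2) := by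
  classical
  by_cases hlen : ts1.length = ts2.length
  case neg =>
    right; intro z hz ha hb
    obtain ⟨zs, he, hf1⟩ := sen_tuple_inv_r ha
    obtain ⟨zs2, he2, hf2⟩ := sen_tuple_inv_r hb
    subst he; obtain rfl : zs = zs2 := by injection he2
    have e1 := hf1.length_eq; have e2 := hf2.length_eq
    omega
  case pos =>
  have hzlen : (ts1.zip ts2).length = ts1.length := by
    simp [List.length_zip, hlen]
  have hzget : ∀ (i : ℕ) (hi : i < (ts1.zip ts2).length),
      (ts1.zip ts2).get ⟨i, hi⟩ =
        (ts1.get ⟨i, by omega⟩, ts2.get ⟨i, by rw [hzlen] at hi; omega⟩) := by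
    intro i hi
    simp [List.get_eq_getElem, List.getElem_zip]
  by_cases hc : ∀ p ∈ ts1.zip ts2, ∃ w, WF w ∧ Sen w p.1 ∧ Sen w p.2
  case neg =>
    right
    push_neg at hc
    obtain ⟨p, hp, hbad⟩ := hc
    have hR : ∀ w, WF w → Sen w p.1 → Sen w p.2 → False := by
      rcases IH p hp with ⟨w, hw, hs1, hs2, _⟩ | hr
      · intro w hw' a b; exact hbad w hw' a b
      · exact hr
    intro z hz ha hb
    obtain ⟨zs, he, hf1⟩ := sen_tuple_inv_r ha
    obtain ⟨zs2, he2, hf2⟩ := sen_tuple_inv_r hb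
    subst he; obtain rfl : zs = zs2 := by injection he2
    obtain ⟨i, hip⟩ := List.mem_iff_get.mp hp
    have hi1 : (i : ℕ) < ts1.length := by have h' := i.2; omega
    have hi2 : (i : ℕ) < ts2.length := by have h' := i.2; omega
    have hiz : (i : ℕ) < zs.length := by have h' := hf1.length_eq; omega
    have hq : p = (ts1.get ⟨i, hi1⟩, ts2.get ⟨i, hi2⟩) := by
      rw [← hip]; exact hzget i i.2
    refine hR (zs.get ⟨i, hiz⟩) (wf_tuple_mem hz (List.get_mem _ _)) ?_ ?_
    · rw [hq]; exact forall₂_get_of hf1 i hiz hi1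
    · rw [hq]; exact forall₂_get_of hf2 i hiz hi2
  case pos =>
    left
    have hWex : ∀ p : GTerm σ × GTerm σ, ∃ w, p ∈ ts1.zip ts2 →
        WF w ∧ Sen w p.1 ∧ Sen w p.2 ∧
          ∀ z, WF z → Sen z p.1 → Sen z p.2 → Sen z w := by
      intro p
      by_cases hp : p ∈ ts1.zip ts2
      · rcases IH p hp with ⟨w, hw⟩ | hr
        · exact ⟨w, fun _ => hw⟩
        · obtain ⟨w, hw, hs1, hs2⟩ := hc p hp
          exact (hr w hw hs1 hs2).elim
      · exact ⟨.record [], fun h => (hp h).elim⟩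
    choose W hW using hWex
    set gl := (ts1.zip ts2).map W with hgl
    have hgllen : gl.length = ts1.length := by simp [hgl, hzlen]
    have hglget : ∀ (i : ℕ) (hi : i < gl.length),
        gl.get ⟨i, hi⟩ = W ((ts1.zip ts2).get ⟨i, by simpa [hgl] using hi⟩) := by
      intro i hi
      simp [hgl, List.get_eq_getElem, List.getElem_map]
    have hWp : ∀ (i : ℕ) (hi : i < gl.length),
        WF (gl.get ⟨i, hi⟩) ∧
        Sen (gl.get ⟨i, hi⟩) (ts1.get ⟨i, by omega⟩) ∧
        Sen (gl.get ⟨i, hi⟩) (ts2.get ⟨i, by rw [hgllen] at hi; omega⟩) ∧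
        ∀ z, WF z → Sen z (ts1.get ⟨i, by omega⟩) →
          Sen z (ts2.get ⟨i, by rw [hgllen] at hi; omega⟩) → Sen z (gl.get ⟨i, hi⟩) := by
      intro i hi
      have hiz : i < (ts1.zip ts2).length := by simpa [hgl] using hi
      have hmem : (ts1.zip ts2).get ⟨i, hiz⟩ ∈ ts1.zip ts2 := List.get_mem _ _
      have h0 := hW _ hmem
      rw [hzget i hiz] at h0
      rw [hglget i hi, hzget]
      exact h0
    refine ⟨.tuple gl, ?_, ?_, ?_, ?_⟩
    · refine WF.tuple ?_ ?_
      · intro h; apply wf_tuple_ne h1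
        have : gl.length = 0 := by rw [h]; rfl
        rw [hgllen] at this
        exact List.eq_nil_of_length_eq_zero this
      · intro t ht
        obtain ⟨i, hit⟩ := List.mem_iff_get.mp ht
        rw [← hit]; exact (hWp i i.2).1
    · exact .tuple hgllen fun i hi hi' => (hWp i hi).2.1
    · refine .tuple (by omega) fun i hi hi' => ?_
      exact (hWp i hi).2.2.1
    · intro z hz ha hb
      obtain ⟨zs, he, hf1⟩ := sen_tuple_inv_r ha
      obtain ⟨zs2, he2, hf2⟩ := sen_tuple_inv_r hb
      subst he; obtain rfl : zs = zs2 := by injection he2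
      have hlz : zs.length = gl.length := by
        have := hf1.length_eq; omega
      refine .tuple hlz fun i hi hi' => ?_
      refine (hWp i hi').2.2.2 _ (wf_tuple_mem hz (List.get_mem _ _)) ?_ ?_
      · exact forall₂_get_of hf1 i hi (by omega)
      · exact forall₂_get_of hf2 i hi (by have := hf2.length_eq; omega)

end Core
section Core2
variable {σ : Type}

lemma LS_tuple_tuple {ts1 ts2 : List (GTerm σ)} (h1 : WF (.tuple ts1))
    (h2 : WF (.tuple ts2)) (IH : ∀ p ∈ ts1.zip ts2, LS p.1 p.2) :
    LS (.tuple ts1) (.tuple ts2) := by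
  classical
  by_cases hgood : ts1.length = ts2.length ∧
      ∀ p ∈ ts1.zip ts2, ∃ w, WF w ∧ Sen p.1 w ∧ Sen p.2 w
  case neg =>
    -- lub is nil
    left
    refine ⟨.record [], WF.record (by simp) (by simp), .tupleNil ts1, .tupleNil ts2, ?_⟩
    intro z hz ha hb
    rcases sen_tuple_inv_l ha with ⟨zs, rfl, hf1⟩ | rfl
    · rcases sen_tuple_inv_l hb with ⟨zs2, he2, hf2⟩ | he2
      · obtain rfl : zs = zs2 := by injection he2
        exfalso
        apply hgood
        have e1 := hf1.length_eq; have e2 := hf2.length_eq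
        constructor
        · omega
        · intro p hp
          obtain ⟨i, hip⟩ := List.mem_iff_get.mp hp
          have hzlen : (ts1.zip ts2).length = min ts1.length ts2.length :=
            List.length_zip
          have hi1 : (i : ℕ) < ts1.length := by have h' := i.2; omega
          have hi2 : (i : ℕ) < ts2.length := by have h' := i.2; omega
          have hiz : (i : ℕ) < zs.length := by omega
          have hq : p = (ts1.get ⟨i, hi1⟩, ts2.get ⟨i, hi2⟩) := by
            rw [← hip]
            simp [List.get_eq_getElem, List.getElem_zip]
          refine ⟨zs.get ⟨i, hiz⟩, wf_tuple_mem hz (List.get_mem _ _), ?_, ?_⟩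
          · rw [hq]; exact forall₂_get_of hf1 i hi1 hiz
          · rw [hq]; exact forall₂_get_of hf2 i hi2 hiz
      · exact absurd he2 (by intro h; cases h)
    · exact .refl _
  case pos =>
    obtain ⟨hlen, hc⟩ := hgood
    have hzlen : (ts1.zip ts2).length = ts1.length := by
      simp [List.length_zip, hlen]
    have hzget : ∀ (i : ℕ) (hi : i < (ts1.zip ts2).length),
        (ts1.zip ts2).get ⟨i, hi⟩ =
          (ts1.get ⟨i, by omega⟩, ts2.get ⟨i, by have h' := hzlen; omega⟩) := by
      intro i hi
      simp [List.get_eq_getElem, List.getElem_zip]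
    left
    have hWex : ∀ p : GTerm σ × GTerm σ, ∃ w, p ∈ ts1.zip ts2 →
        WF w ∧ Sen p.1 w ∧ Sen p.2 w ∧
          ∀ z, WF z → Sen p.1 z → Sen p.2 z → Sen w z := by
      intro p
      by_cases hp : p ∈ ts1.zip ts2
      · rcases IH p hp with ⟨w, hw⟩ | hr
        · exact ⟨w, fun _ => hw⟩
        · obtain ⟨w, hw, hs1, hs2⟩ := hc p hp
          exact (hr w hw hs1 hs2).elim
      · exact ⟨.record [], fun h => (hp h).elim⟩
    choose W hW using hWex
    set gl := (ts1.zip ts2).map W with hgl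
    have hgllen : gl.length = ts1.length := by simp [hgl, hzlen]
    have hglget : ∀ (i : ℕ) (hi : i < gl.length),
        gl.get ⟨i, hi⟩ = W ((ts1.zip ts2).get ⟨i, by simpa [hgl] using hi⟩) := by
      intro i hi
      simp [hgl, List.get_eq_getElem, List.getElem_map]
    have hWp : ∀ (i : ℕ) (hi : i < gl.length),
        WF (gl.get ⟨i, hi⟩) ∧
        Sen (ts1.get ⟨i, by omega⟩) (gl.get ⟨i, hi⟩) ∧
        Sen (ts2.get ⟨i, by have h' := hgllen; omega⟩) (gl.get ⟨i, hi⟩) ∧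
        ∀ z, WF z → Sen (ts1.get ⟨i, by omega⟩) z →
          Sen (ts2.get ⟨i, by have h' := hgllen; omega⟩) z → Sen (gl.get ⟨i, hi⟩) z := by
      intro i hi
      have hiz : i < (ts1.zip ts2).length := by simpa [hgl] using hi
      have hmem : (ts1.zip ts2).get ⟨i, hiz⟩ ∈ ts1.zip ts2 := List.get_mem _ _
      have h0 := hW _ hmem
      rw [hzget i hiz] at h0
      rw [hglget i hi, hzget]
      exact h0
    refine ⟨.tuple gl, ?_, ?_, ?_, ?_⟩
    · refine WF.tuple ?_ ?_
      · intro h; apply wf_tuple_ne h1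
        have : gl.length = 0 := by rw [h]; rfl
        rw [hgllen] at this
        exact List.eq_nil_of_length_eq_zero this
      · intro t ht
        obtain ⟨i, hit⟩ := List.mem_iff_get.mp ht
        rw [← hit]; exact (hWp i i.2).1
    · exact .tuple hgllen.symm fun i hi hi' => (hWp i hi').2.1
    · exact .tuple (by omega) fun i hi hi' => (hWp i hi').2.2.1
    · intro z hz ha hb
      rcases sen_tuple_inv_l ha with ⟨zs, rfl, hf1⟩ | rfl
      · rcases sen_tuple_inv_l hb with ⟨zs2, he2, hf2⟩ | he2
        · obtain rfl : zs = zs2 := by injection he2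
          have hlz : gl.length = zs.length := by
            have := hf1.length_eq; omega
          refine .tuple hlz fun i hi hi' => ?_
          refine (hWp i hi).2.2.2 _ (wf_tuple_mem hz (List.get_mem _ _)) ?_ ?_
          · exact forall₂_get_of hf1 i (by omega) hi'
          · exact forall₂_get_of hf2 i (by have := hf2.length_eq; omega) hi'
        · exact absurd he2 (by intro h; cases h)
      · exact .tupleNil gl
end Core2
section Core3
variable {σ : Type}

lemma GS_record_record {es1 es2 : List (σ × GTerm σ)} (h1 : WF (.record es1))
    (h2 : WF (.record es2))
    (IH : ∀ e ∈ es1, ∀ v2, (e.1, v2) ∈ es2 → GS e.2 v2) :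
    GS (.record es1) (.record es2) := by
  classical
  by_cases hc : ∀ e ∈ es1, ∀ v2, (e.1, v2) ∈ es2 → ∃ w, WF w ∧ Sen w e.2 ∧ Sen w v2
  case neg =>
    right
    push_neg at hc
    obtain ⟨e, he, v2, hv2, hbad⟩ := hc
    have hR : ∀ w, WF w → Sen w e.2 → Sen w v2 → False := by
      rcases IH e he v2 hv2 with ⟨w, hw, hs1, hs2, _⟩ | hr
      · intro w hw' a b; exact hbad w hw' a b
      · exact hr
    intro z hz ha hb
    rcases sen_record_inv_r ha with ⟨he1, _⟩ | ⟨zs, rfl, hemb1⟩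
    · rw [he1] at he; simp at he
    · rcases sen_record_inv_r hb with ⟨he2, _⟩ | ⟨zs2, hzz, hemb2⟩
      · rw [he2] at hv2; simp at hv2
      · obtain rfl : zs = zs2 := by injection hzz
        obtain ⟨t, ht, hte⟩ := hemb1 e he
        obtain ⟨t', ht', htv⟩ := hemb2 (e.1, v2) hv2
        obtain rfl : t = t' := nodup_keys_unique (wf_record_nd hz) ht ht'
        exact hR t (wf_record_mem hz ht) hte htv
  case pos =>
    left
    have hWex : ∀ e : σ × GTerm σ, ∃ w, e ∈ es1 →
        (∀ v2, (e.1, v2) ∈ es2 → WF w ∧ Sen w e.2 ∧ Sen w v2 ∧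
          ∀ z, WF z → Sen z e.2 → Sen z v2 → Sen z w) ∧
        ((¬ ∃ v2, (e.1, v2) ∈ es2) → w = e.2) := by
      intro e
      by_cases he : e ∈ es1
      · by_cases hv : ∃ v2, (e.1, v2) ∈ es2
        · obtain ⟨v2, hv2⟩ := hv
          rcases IH e he v2 hv2 with ⟨w, hw, hs1, hs2, hu⟩ | hr
          · refine ⟨w, fun _ => ⟨fun v2' hv2' => ?_, fun hn => (hn ⟨v2, hv2⟩).elim⟩⟩
            obtain rfl : v2' = v2 := nodup_keys_unique (wf_record_nd h2) hv2' hv2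
            exact ⟨hw, hs1, hs2, hu⟩
          · obtain ⟨w, hw, hs1, hs2⟩ := hc e he v2 hv2
            exact (hr w hw hs1 hs2).elim
        · exact ⟨e.2, fun _ => ⟨fun v2 hv2 => (hv ⟨v2, hv2⟩).elim, fun _ => rfl⟩⟩
      · exact ⟨.record [], fun h => (he h).elim⟩
    choose W hW using hWex
    set ges := es1.map (fun e => (e.1, W e)) ++
      es2.filter (fun e => decide (e.1 ∉ es1.map Prod.fst)) with hges
    have hmem_ges : ∀ x ∈ ges,
        (∃ e, e ∈ es1 ∧ x = (e.1, W e)) ∨ (x ∈ es2 ∧ x.1 ∉ es1.map Prod.fst) := by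
      intro x hx
      rcases List.mem_append.mp hx with hx | hx
      · obtain ⟨e, he, rfl⟩ := List.mem_map.mp hx
        exact Or.inl ⟨e, he, rfl⟩
      · have := List.mem_filter.mp hx
        exact Or.inr ⟨this.1, by simpa using this.2⟩
    have hkeys : ges.map Prod.fst =
        es1.map Prod.fst ++ (es2.filter (fun e => decide (e.1 ∉ es1.map Prod.fst))).map Prod.fst := by
      simp [hges]
    have hnd : (ges.map Prod.fst).Nodup := by
      rw [hkeys]
      refine List.Nodup.append (wf_record_nd h1) ?_ ?_
      · exact ((List.filter_sublist).map Prod.fst).nodup (wf_record_nd h2)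
      · intro l hl1 hl2
        obtain ⟨e, he, rfl⟩ := List.mem_map.mp hl2
        have h3 : e.1 ∉ es1.map Prod.fst := of_decide_eq_true (List.mem_filter.mp he).2
        exact h3 hl1
    have hsen1 : ∀ e ∈ es1, Sen (W e) e.2 := by
      intro e he
      by_cases hv : ∃ v2, (e.1, v2) ∈ es2
      · obtain ⟨v2, hv2⟩ := hv
        exact ((hW e he).1 v2 hv2).2.1
      · rw [(hW e he).2 hv]; exact .refl _
    have hwf : WF (.record ges) := by
      refine WF.record hnd ?_
      intro x hx
      rcases hmem_ges x hx with ⟨e, he, rfl⟩ | ⟨hx2, _⟩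
      · by_cases hv : ∃ v2, (e.1, v2) ∈ es2
        · obtain ⟨v2, hv2⟩ := hv
          exact ((hW e he).1 v2 hv2).1
        · rw [(hW e he).2 hv]; exact wf_record_mem h1 he
      · exact wf_record_mem h2 hx2
    refine ⟨.record ges, hwf, ?_, ?_, ?_⟩
    · refine sen_record_of_emb (wf_record_nd h1) ?_
      intro e he
      refine ⟨W e, ?_, hsen1 e he⟩
      exact List.mem_append.mpr (Or.inl (List.mem_map.mpr ⟨e, he, rfl⟩))
    · refine sen_record_of_emb (wf_record_nd h2) ?_
      intro e' he'
      by_cases hl : e'.1 ∈ es1.map Prod.fst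
      · obtain ⟨e1, he1, hfe⟩ := List.mem_map.mp hl
        have hv2 : (e1.1, e'.2) ∈ es2 := by rw [hfe]; exact he'
        refine ⟨W e1, ?_, ((hW e1 he1).1 e'.2 hv2).2.2.1⟩
        rw [← hfe]
        exact List.mem_append.mpr (Or.inl (List.mem_map.mpr ⟨e1, he1, rfl⟩))
      · refine ⟨e'.2, ?_, .refl _⟩
        refine List.mem_append.mpr (Or.inr ?_)
        exact List.mem_filter.mpr ⟨by simpa using he', by simpa using hl⟩
    · intro z hz ha hb
      have hrec : (∃ zs, z = .record zs ∧ Emb zs es1 ∧ Emb zs es2) ∨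
          (es1 = [] ∧ es2 = [] ∧ IsDown z) := by
        rcases sen_record_inv_r ha with ⟨he1, hdz⟩ | ⟨zs, rfl, hemb1⟩
        · rcases sen_record_inv_r hb with ⟨he2, hdz2⟩ | ⟨zs, rfl, hemb2⟩
          · exact Or.inr ⟨he1, he2, hdz⟩
          · exact Or.inl ⟨zs, rfl, by rw [he1]; intro e he; simp at he, hemb2⟩
        · rcases sen_record_inv_r hb with ⟨he2, hdz2⟩ | ⟨zs2, hzz, hemb2⟩
          · exact Or.inl ⟨zs, rfl, hemb1, by rw [he2]; intro e he; simp at he⟩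
          · obtain rfl : zs = zs2 := by injection hzz
            exact Or.inl ⟨zs, rfl, hemb1, hemb2⟩
      rcases hrec with ⟨zs, rfl, hemb1, hemb2⟩ | ⟨he1, he2, hdz⟩
      · refine sen_record_of_emb hnd ?_
        intro x hx
        rcases hmem_ges x hx with ⟨e, he, rfl⟩ | ⟨hx2, _⟩
        · obtain ⟨t, ht, hte⟩ := hemb1 e he
          by_cases hv : ∃ v2, (e.1, v2) ∈ es2
          · obtain ⟨v2, hv2⟩ := hv
            obtain ⟨t', ht', htv⟩ := hemb2 (e.1, v2) hv2
            obtain rfl : t = t' := nodup_keys_unique (wf_record_nd hz) ht ht'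
            exact ⟨t, ht, ((hW e he).1 v2 hv2).2.2.2 t (wf_record_mem hz ht) hte htv⟩
          · exact ⟨t, ht, by rw [(hW e he).2 hv]; exact hte⟩
        · exact hemb2 x hx2
      · have : ges = [] := by rw [hges, he1, he2]; simp
        rw [this]
        exact down_le_nil hdz
end Core3
section Core4
variable {σ : Type}

lemma LS_choice_choice {es1 es2 : List (σ × GTerm σ)} (h1 : WF (.choice es1))
    (h2 : WF (.choice es2))
    (IH : ∀ e ∈ es1, ∀ v2, (e.1, v2) ∈ es2 → LS e.2 v2) :
    LS (.choice es1) (.choice es2) := by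
  classical
  by_cases hc : ∀ e ∈ es1, ∀ v2, (e.1, v2) ∈ es2 → ∃ w, WF w ∧ Sen e.2 w ∧ Sen v2 w
  case neg =>
    right
    push_neg at hc
    obtain ⟨e, he, v2, hv2, hbad⟩ := hc
    have hR : ∀ w, WF w → Sen e.2 w → Sen v2 w → False := by
      rcases IH e he v2 hv2 with ⟨w, hw, hs1, hs2, _⟩ | hr
      · intro w hw' a b; exact hbad w hw' a b
      · exact hr
    intro z hz ha hb
    obtain ⟨zs, rfl, hemb1⟩ := sen_choice_inv_l ha
    obtain ⟨zs2, hzz, hemb2⟩ := sen_choice_inv_l hb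
    obtain rfl : zs = zs2 := by injection hzz
    obtain ⟨t, ht, hte⟩ := hemb1 e he
    obtain ⟨t', ht', htv⟩ := hemb2 (e.1, v2) hv2
    obtain rfl : t = t' := nodup_keys_unique (wf_choice_nd hz) ht ht'
    exact hR t (wf_choice_mem hz ht) hte htv
  case pos =>
    left
    have hWex : ∀ e : σ × GTerm σ, ∃ w, e ∈ es1 →
        (∀ v2, (e.1, v2) ∈ es2 → WF w ∧ Sen e.2 w ∧ Sen v2 w ∧
          ∀ z, WF z → Sen e.2 z → Sen v2 z → Sen w z) ∧
        ((¬ ∃ v2, (e.1, v2) ∈ es2) → w = e.2) := by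
      intro e
      by_cases he : e ∈ es1
      · by_cases hv : ∃ v2, (e.1, v2) ∈ es2
        · obtain ⟨v2, hv2⟩ := hv
          rcases IH e he v2 hv2 with ⟨w, hw, hs1, hs2, hu⟩ | hr
          · refine ⟨w, fun _ => ⟨fun v2' hv2' => ?_, fun hn => (hn ⟨v2, hv2⟩).elim⟩⟩
            obtain rfl : v2' = v2 := nodup_keys_unique (wf_choice_nd h2) hv2' hv2
            exact ⟨hw, hs1, hs2, hu⟩
          · obtain ⟨w, hw, hs1, hs2⟩ := hc e he v2 hv2
            exact (hr w hw hs1 hs2).elim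
        · exact ⟨e.2, fun _ => ⟨fun v2 hv2 => (hv ⟨v2, hv2⟩).elim, fun _ => rfl⟩⟩
      · exact ⟨.record [], fun h => (he h).elim⟩
    choose W hW using hWex
    set ges := es1.map (fun e => (e.1, W e)) ++
      es2.filter (fun e => decide (e.1 ∉ es1.map Prod.fst)) with hges
    have hmem_ges : ∀ x ∈ ges,
        (∃ e, e ∈ es1 ∧ x = (e.1, W e)) ∨ (x ∈ es2 ∧ x.1 ∉ es1.map Prod.fst) := by
      intro x hx
      rcases List.mem_append.mp hx with hx | hx
      · obtain ⟨e, he, rfl⟩ := List.mem_map.mp hx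
        exact Or.inl ⟨e, he, rfl⟩
      · have := List.mem_filter.mp hx
        exact Or.inr ⟨this.1, of_decide_eq_true this.2⟩
    have hkeys : ges.map Prod.fst =
        es1.map Prod.fst ++ (es2.filter (fun e => decide (e.1 ∉ es1.map Prod.fst))).map Prod.fst := by
      simp [hges]
    have hnd : (ges.map Prod.fst).Nodup := by
      rw [hkeys]
      refine List.Nodup.append (wf_choice_nd h1) ?_ ?_
      · exact ((List.filter_sublist).map Prod.fst).nodup (wf_choice_nd h2)
      · intro l hl1 hl2
        obtain ⟨e, he, rfl⟩ := List.mem_map.mp hl2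
        have h3 : e.1 ∉ es1.map Prod.fst := of_decide_eq_true (List.mem_filter.mp he).2
        exact h3 hl1
    have hsen1 : ∀ e ∈ es1, Sen e.2 (W e) := by
      intro e he
      by_cases hv : ∃ v2, (e.1, v2) ∈ es2
      · obtain ⟨v2, hv2⟩ := hv
        exact ((hW e he).1 v2 hv2).2.1
      · rw [(hW e he).2 hv]; exact .refl _
    have hwf : WF (.choice ges) := by
      refine WF.choice hnd ?_
      intro x hx
      rcases hmem_ges x hx with ⟨e, he, rfl⟩ | ⟨hx2, _⟩
      · by_cases hv : ∃ v2, (e.1, v2) ∈ es2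
        · obtain ⟨v2, hv2⟩ := hv
          exact ((hW e he).1 v2 hv2).1
        · rw [(hW e he).2 hv]; exact wf_choice_mem h1 he
      · exact wf_choice_mem h2 hx2
    refine ⟨.choice ges, hwf, ?_, ?_, ?_⟩
    · refine sen_choice_of_cemb (wf_choice_nd h1) ?_
      intro e he
      refine ⟨W e, ?_, hsen1 e he⟩
      exact List.mem_append.mpr (Or.inl (List.mem_map.mpr ⟨e, he, rfl⟩))
    · refine sen_choice_of_cemb (wf_choice_nd h2) ?_
      intro e' he'
      by_cases hl : e'.1 ∈ es1.map Prod.fst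
      · obtain ⟨e1, he1, hfe⟩ := List.mem_map.mp hl
        have hv2 : (e1.1, e'.2) ∈ es2 := by rw [hfe]; exact he'
        refine ⟨W e1, ?_, ((hW e1 he1).1 e'.2 hv2).2.2.1⟩
        rw [← hfe]
        exact List.mem_append.mpr (Or.inl (List.mem_map.mpr ⟨e1, he1, rfl⟩))
      · refine ⟨e'.2, ?_, .refl _⟩
        refine List.mem_append.mpr (Or.inr ?_)
        exact List.mem_filter.mpr ⟨by simpa using he', decide_eq_true hl⟩
    · intro z hz ha hb
      obtain ⟨zs, rfl, hemb1⟩ := sen_choice_inv_l ha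
      obtain ⟨zs2, hzz, hemb2⟩ := sen_choice_inv_l hb
      obtain rfl : zs = zs2 := by injection hzz
      refine sen_choice_of_cemb hnd ?_
      intro x hx
      rcases hmem_ges x hx with ⟨e, he, rfl⟩ | ⟨hx2, _⟩
      · obtain ⟨t, ht, hte⟩ := hemb1 e he
        by_cases hv : ∃ v2, (e.1, v2) ∈ es2
        · obtain ⟨v2, hv2⟩ := hv
          obtain ⟨t', ht', htv⟩ := hemb2 (e.1, v2) hv2
          obtain rfl : t = t' := nodup_keys_unique (wf_choice_nd hz) ht ht'
          exact ⟨t, ht, ((hW e he).1 v2 hv2).2.2.2 t (wf_choice_mem hz ht) hte htv⟩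
        · exact ⟨t, ht, by rw [(hW e he).2 hv]; exact hte⟩
      · exact hemb2 x hx2

lemma LS_record_record {es1 es2 : List (σ × GTerm σ)} (h1 : WF (.record es1))
    (h2 : WF (.record es2))
    (IH : ∀ e ∈ es1, ∀ v2, (e.1, v2) ∈ es2 → LS e.2 v2) :
    LS (.record es1) (.record es2) := by
  classical
  left
  have hWex : ∀ e : σ × GTerm σ, ∃ w, e ∈ es1 →
      ∀ v2, (e.1, v2) ∈ es2 → (∃ u, WF u ∧ Sen e.2 u ∧ Sen v2 u) →
        WF w ∧ Sen e.2 w ∧ Sen v2 w ∧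
          ∀ z, WF z → Sen e.2 z → Sen v2 z → Sen w z := by
    intro e
    by_cases he : e ∈ es1
    · by_cases hq : ∃ v2, (e.1, v2) ∈ es2 ∧ ∃ u, WF u ∧ Sen e.2 u ∧ Sen v2 u
      · obtain ⟨v2, hv2, hub⟩ := hq
        rcases IH e he v2 hv2 with ⟨w, hw, hs1, hs2, hu⟩ | hr
        · refine ⟨w, fun _ v2' hv2' _ => ?_⟩
          obtain rfl : v2' = v2 := nodup_keys_unique (wf_record_nd h2) hv2' hv2
          exact ⟨hw, hs1, hs2, hu⟩
        · obtain ⟨u, hu1, hu2, hu3⟩ := hub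
          exact (hr u hu1 hu2 hu3).elim
      · refine ⟨.record [], fun _ v2 hv2 hub => ?_⟩
        exact (hq ⟨v2, hv2, hub⟩).elim
    · exact ⟨.record [], fun h => (he h).elim⟩
  choose W hW using hWex
  set Q : σ × GTerm σ → Prop :=
    fun e => ∃ v2, (e.1, v2) ∈ es2 ∧ ∃ u, WF u ∧ Sen e.2 u ∧ Sen v2 u with hQ
  set lges := (es1.filter (fun e => decide (Q e))).map (fun e => (e.1, W e)) with hlges
  have hmem : ∀ x ∈ lges, ∃ e, e ∈ es1 ∧ Q e ∧ x = (e.1, W e) := by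
    intro x hx
    obtain ⟨e, he, rfl⟩ := List.mem_map.mp hx
    have := List.mem_filter.mp he
    exact ⟨e, this.1, of_decide_eq_true this.2, rfl⟩
  have hnd : (lges.map Prod.fst).Nodup := by
    have : lges.map Prod.fst = (es1.filter (fun e => decide (Q e))).map Prod.fst := by
      simp [hlges]
    rw [this]
    exact ((List.filter_sublist).map Prod.fst).nodup (wf_record_nd h1)
  have hwf : WF (.record lges) := by
    refine WF.record hnd ?_
    intro x hx
    obtain ⟨e, he, hQe, rfl⟩ := hmem x hx
    obtain ⟨v2, hv2, hub⟩ := hQe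
    exact (hW e he v2 hv2 hub).1
  refine ⟨.record lges, hwf, ?_, ?_, ?_⟩
  · refine sen_record_of_emb hnd ?_
    intro x hx
    obtain ⟨e, he, hQe, rfl⟩ := hmem x hx
    obtain ⟨v2, hv2, hub⟩ := hQe
    exact ⟨e.2, by simpa using he, (hW e he v2 hv2 hub).2.1⟩
  · refine sen_record_of_emb hnd ?_
    intro x hx
    obtain ⟨e, he, hQe, rfl⟩ := hmem x hx
    obtain ⟨v2, hv2, hub⟩ := hQe
    exact ⟨v2, hv2, (hW e he v2 hv2 hub).2.2.1⟩
  · intro z hz ha hb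
    obtain ⟨zs, rfl, hemb1⟩ := sen_record_inv_l ha
    obtain ⟨zs2, hzz, hemb2⟩ := sen_record_inv_l hb
    obtain rfl : zs = zs2 := by injection hzz
    refine sen_record_of_emb (wf_record_nd hz) ?_
    intro e he
    obtain ⟨t1, ht1, hs1⟩ := hemb1 e he
    obtain ⟨t2, ht2, hs2⟩ := hemb2 e he
    have hQe : Q (e.1, t1) := ⟨t2, ht2, e.2, wf_record_mem hz he, hs1, hs2⟩
    refine ⟨W (e.1, t1), ?_, ?_⟩
    · refine List.mem_map.mpr ⟨(e.1, t1), ?_, rfl⟩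
      exact List.mem_filter.mpr ⟨ht1, decide_eq_true hQe⟩
    · exact (hW (e.1, t1) ht1 t2 ht2 ⟨e.2, wf_record_mem hz he, hs1, hs2⟩).2.2.2
        e.2 (wf_record_mem hz he) hs1 hs2

lemma GS_choice_choice {es1 es2 : List (σ × GTerm σ)} (h1 : WF (.choice es1))
    (h2 : WF (.choice es2))
    (IH : ∀ e ∈ es1, ∀ v2, (e.1, v2) ∈ es2 → GS e.2 v2) :
    GS (.choice es1) (.choice es2) := by
  classical
  left
  have hWex : ∀ e : σ × GTerm σ, ∃ w, e ∈ es1 →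
      ∀ v2, (e.1, v2) ∈ es2 → (∃ u, WF u ∧ Sen u e.2 ∧ Sen u v2) →
        WF w ∧ Sen w e.2 ∧ Sen w v2 ∧
          ∀ z, WF z → Sen z e.2 → Sen z v2 → Sen z w := by
    intro e
    by_cases he : e ∈ es1
    · by_cases hq : ∃ v2, (e.1, v2) ∈ es2 ∧ ∃ u, WF u ∧ Sen u e.2 ∧ Sen u v2
      · obtain ⟨v2, hv2, hub⟩ := hq
        rcases IH e he v2 hv2 with ⟨w, hw, hs1, hs2, hu⟩ | hr
        · refine ⟨w, fun _ v2' hv2' _ => ?_⟩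
          obtain rfl : v2' = v2 := nodup_keys_unique (wf_choice_nd h2) hv2' hv2
          exact ⟨hw, hs1, hs2, hu⟩
        · obtain ⟨u, hu1, hu2, hu3⟩ := hub
          exact (hr u hu1 hu2 hu3).elim
      · refine ⟨.record [], fun _ v2 hv2 hub => ?_⟩
        exact (hq ⟨v2, hv2, hub⟩).elim
    · exact ⟨.record [], fun h => (he h).elim⟩
  choose W hW using hWex
  set Q : σ × GTerm σ → Prop :=
    fun e => ∃ v2, (e.1, v2) ∈ es2 ∧ ∃ u, WF u ∧ Sen u e.2 ∧ Sen u v2 with hQ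
  set gges := (es1.filter (fun e => decide (Q e))).map (fun e => (e.1, W e)) with hgges
  have hmem : ∀ x ∈ gges, ∃ e, e ∈ es1 ∧ Q e ∧ x = (e.1, W e) := by
    intro x hx
    obtain ⟨e, he, rfl⟩ := List.mem_map.mp hx
    have := List.mem_filter.mp he
    exact ⟨e, this.1, of_decide_eq_true this.2, rfl⟩
  have hnd : (gges.map Prod.fst).Nodup := by
    have : gges.map Prod.fst = (es1.filter (fun e => decide (Q e))).map Prod.fst := by
      simp [hgges]
    rw [this]
    exact ((List.filter_sublist).map Prod.fst).nodup (wf_choice_nd h1)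
  have hwf : WF (.choice gges) := by
    refine WF.choice hnd ?_
    intro x hx
    obtain ⟨e, he, hQe, rfl⟩ := hmem x hx
    obtain ⟨v2, hv2, hub⟩ := hQe
    exact (hW e he v2 hv2 hub).1
  refine ⟨.choice gges, hwf, ?_, ?_, ?_⟩
  · refine sen_choice_of_cemb hnd ?_
    intro x hx
    obtain ⟨e, he, hQe, rfl⟩ := hmem x hx
    obtain ⟨v2, hv2, hub⟩ := hQe
    exact ⟨e.2, by simpa using he, (hW e he v2 hv2 hub).2.1⟩
  · refine sen_choice_of_cemb hnd ?_
    intro x hx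
    obtain ⟨e, he, hQe, rfl⟩ := hmem x hx
    obtain ⟨v2, hv2, hub⟩ := hQe
    exact ⟨v2, hv2, (hW e he v2 hv2 hub).2.2.1⟩
  · intro z hz ha hb
    obtain ⟨zs, rfl, hemb1⟩ := sen_choice_inv_r ha
    obtain ⟨zs2, hzz, hemb2⟩ := sen_choice_inv_r hb
    obtain rfl : zs = zs2 := by injection hzz
    refine sen_choice_of_cemb (wf_choice_nd hz) ?_
    intro e he
    obtain ⟨t1, ht1, hs1⟩ := hemb1 e he
    obtain ⟨t2, ht2, hs2⟩ := hemb2 e he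
    have hQe : Q (e.1, t1) := ⟨t2, ht2, e.2, wf_choice_mem hz he, hs1, hs2⟩
    refine ⟨W (e.1, t1), ?_, ?_⟩
    · refine List.mem_map.mpr ⟨(e.1, t1), ?_, rfl⟩
      exact List.mem_filter.mpr ⟨ht1, decide_eq_true hQe⟩
    · exact (hW (e.1, t1) ht1 t2 ht2 ⟨e.2, wf_choice_mem hz he, hs1, hs2⟩).2.2.2
        e.2 (wf_choice_mem hz he) hs1 hs2
end Core4
section Cross
variable {σ : Type}

lemma wf_nil : WF (GTerm.record ([] : List (σ × GTerm σ))) :=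
  WF.record (by simp) (by simp)

lemma GS_sym_sym (s s' : σ) : GS (.sym s) (.sym s') := by
  by_cases h : s = s'
  · subst h
    exact Or.inl ⟨.sym s, WF.sym s, .refl _, .refl _, fun z _ hz _ => hz⟩
  · right; intro z _ ha hb
    rw [sen_sym_inv_r ha] at hb
    have := sen_sym_inv_r hb
    exact h (by injection this)

lemma GS_sym_tuple (s : σ) (ts : List (GTerm σ)) : GS (.sym s) (.tuple ts) := by
  right; intro z _ ha hb
  rw [sen_sym_inv_r ha] at hb
  obtain ⟨ts', he, _⟩ := sen_tuple_inv_r hb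
  cases he

lemma GS_sym_record (s : σ) (es : List (σ × GTerm σ)) : GS (.sym s) (.record es) := by
  rcases eq_or_ne es [] with rfl | hne
  · refine Or.inl ⟨.sym s, WF.sym s, .refl _, .symNil s, fun z _ hz _ => hz⟩
  · right; intro z _ ha hb
    rw [sen_sym_inv_r ha] at hb
    rcases sen_record_inv_r hb with ⟨he, _⟩ | ⟨es', he, _⟩
    · exact hne he
    · cases he

lemma GS_sym_choice (s : σ) (es : List (σ × GTerm σ)) : GS (.sym s) (.choice es) := by
  right; intro z _ ha hb
  rw [sen_sym_inv_r ha] at hb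
  obtain ⟨es', he, _⟩ := sen_choice_inv_r hb
  cases he

lemma GS_tuple_record {ts : List (GTerm σ)} (h : WF (.tuple ts)) (es : List (σ × GTerm σ)) :
    GS (.tuple ts) (.record es) := by
  rcases eq_or_ne es [] with rfl | hne
  · exact Or.inl ⟨.tuple ts, h, .refl _, .tupleNil ts, fun z _ hz _ => hz⟩
  · right; intro z _ ha hb
    obtain ⟨zs, rfl, _⟩ := sen_tuple_inv_r ha
    rcases sen_record_inv_r hb with ⟨he, _⟩ | ⟨es', he, _⟩
    · exact hne he
    · cases he

lemma GS_tuple_choice (ts : List (GTerm σ)) (es : List (σ × GTerm σ)) :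
    GS (.tuple ts) (.choice es) := by
  right; intro z _ ha hb
  obtain ⟨zs, rfl, _⟩ := sen_tuple_inv_r ha
  obtain ⟨es', he, _⟩ := sen_choice_inv_r hb
  cases he

lemma GS_record_choice (es1 es2 : List (σ × GTerm σ)) :
    GS (.record es1) (.choice es2) := by
  right; intro z _ ha hb
  obtain ⟨es', he, _⟩ := sen_choice_inv_r hb
  subst he
  rcases sen_record_inv_r ha with ⟨_, hd⟩ | ⟨es'', he, _⟩
  · simp [IsDown] at hd
  · cases he

lemma LS_sym_sym (s s' : σ) : LS (.sym s) (.sym s') := by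
  by_cases h : s = s'
  · subst h
    exact Or.inl ⟨.sym s, WF.sym s, .refl _, .refl _, fun z _ hz _ => hz⟩
  · left
    refine ⟨.record [], wf_nil, .symNil s, .symNil s', ?_⟩
    intro z _ ha hb
    rcases sen_sym_inv_l ha with rfl | rfl
    · rcases sen_sym_inv_l hb with he | he
      · exact absurd (by injection he : s = s') h
      · cases he
    · exact .refl _

lemma LS_sym_tuple (s : σ) (ts : List (GTerm σ)) : LS (.sym s) (.tuple ts) := by
  left
  refine ⟨.record [], wf_nil, .symNil s, .tupleNil ts, ?_⟩
  intro z _ ha hb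
  rcases sen_sym_inv_l ha with rfl | rfl
  · rcases sen_tuple_inv_l hb with ⟨ts', he, _⟩ | he
    · cases he
    · cases he
  · exact .refl _

lemma LS_sym_record (s : σ) (es : List (σ × GTerm σ)) : LS (.sym s) (.record es) := by
  left
  refine ⟨.record [], wf_nil, .symNil s, .recordNil es, ?_⟩
  intro z _ ha hb
  rcases sen_sym_inv_l ha with rfl | rfl
  · obtain ⟨es', he, _⟩ := sen_record_inv_l hb
    cases he
  · exact .refl _

lemma LS_tuple_record (ts : List (GTerm σ)) (es : List (σ × GTerm σ)) :
    LS (.tuple ts) (.record es) := by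
  left
  refine ⟨.record [], wf_nil, .tupleNil ts, .recordNil es, ?_⟩
  intro z _ ha hb
  rcases sen_tuple_inv_l ha with ⟨ts', rfl, _⟩ | rfl
  · obtain ⟨es', he, _⟩ := sen_record_inv_l hb
    cases he
  · exact .refl _

lemma LS_sym_choice (s : σ) (es : List (σ × GTerm σ)) : LS (.sym s) (.choice es) := by
  right; intro z _ ha hb
  obtain ⟨es', rfl, _⟩ := sen_choice_inv_l hb
  rcases sen_sym_inv_l ha with he | he <;> cases he

lemma LS_tuple_choice (ts : List (GTerm σ)) (es : List (σ × GTerm σ)) :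
    LS (.tuple ts) (.choice es) := by
  right; intro z _ ha hb
  obtain ⟨es', rfl, _⟩ := sen_choice_inv_l hb
  rcases sen_tuple_inv_l ha with ⟨ts', he, _⟩ | he <;> cases he

lemma LS_record_choice (es1 es2 : List (σ × GTerm σ)) :
    LS (.record es1) (.choice es2) := by
  right; intro z _ ha hb
  obtain ⟨es', rfl, _⟩ := sen_choice_inv_l hb
  obtain ⟨es'', he, _⟩ := sen_record_inv_l ha
  cases he

end Cross
section Main
variable {σ : Type}

theorem GS_and_LS : ∀ (n : ℕ) (t1 t2 : GTerm σ), sizeOf t1 + sizeOf t2 ≤ n →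
    WF t1 → WF t2 → GS t1 t2 ∧ LS t1 t2 := by
  intro n
  induction n with
  | zero =>
    intro t1 t2 h _ _
    have := sizeOf_pos t1; have := sizeOf_pos t2; omega
  | succ n IHn =>
    intro t1 t2 hsz h1 h2
    cases t1 with
    | sym s =>
      cases t2 with
      | sym s' => exact ⟨GS_sym_sym s s', LS_sym_sym s s'⟩
      | tuple ts => exact ⟨GS_sym_tuple s ts, LS_sym_tuple s ts⟩
      | record es => exact ⟨GS_sym_record s es, LS_sym_record s es⟩
      | choice es => exact ⟨GS_sym_choice s es, LS_sym_choice s es⟩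
    | tuple ts =>
      cases t2 with
      | sym s' => exact ⟨GS_symm (GS_sym_tuple s' ts), LS_symm (LS_sym_tuple s' ts)⟩
      | tuple ts2 =>
        have IHv : ∀ p ∈ ts.zip ts2, GS p.1 p.2 ∧ LS p.1 p.2 := by
          intro p hp
          obtain ⟨a, b⟩ := p
          obtain ⟨ha, hb⟩ := List.of_mem_zip hp
          have s1 := size_mem_tuple ha
          have s2 := size_mem_tuple hb
          exact IHn a b (by omega) (wf_tuple_mem h1 ha) (wf_tuple_mem h2 hb)
        exact ⟨GS_tuple_tuple h1 h2 (fun p hp => (IHv p hp).1),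
               LS_tuple_tuple h1 h2 (fun p hp => (IHv p hp).2)⟩
      | record es => exact ⟨GS_tuple_record h1 es, LS_tuple_record ts es⟩
      | choice es => exact ⟨GS_tuple_choice ts es, LS_tuple_choice ts es⟩
    | record es =>
      cases t2 with
      | sym s' => exact ⟨GS_symm (GS_sym_record s' es), LS_symm (LS_sym_record s' es)⟩
      | tuple ts => exact ⟨GS_symm (GS_tuple_record h2 es), LS_symm (LS_tuple_record ts es)⟩
      | record es2 =>
        have IHv : ∀ e ∈ es, ∀ v2, (e.1, v2) ∈ es2 → GS e.2 v2 ∧ LS e.2 v2 := by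
          intro e he v2 hv2
          have s1 := size_mem_record he
          have s2 := size_mem_record hv2
          simp only at s2
          exact IHn e.2 v2 (by omega) (wf_record_mem h1 he) (wf_record_mem h2 hv2)
        exact ⟨GS_record_record h1 h2 (fun e he v2 hv2 => (IHv e he v2 hv2).1),
               LS_record_record h1 h2 (fun e he v2 hv2 => (IHv e he v2 hv2).2)⟩
      | choice es2 => exact ⟨GS_record_choice es es2, LS_record_choice es es2⟩
    | choice es =>
      cases t2 with
      | sym s' => exact ⟨GS_symm (GS_sym_choice s' es), LS_symm (LS_sym_choice s' es)⟩
      | tuple ts => exact ⟨GS_symm (GS_tuple_choice ts es), LS_symm (LS_tuple_choice ts es)⟩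
      | record es2 => exact ⟨GS_symm (GS_record_choice es2 es), LS_symm (LS_record_choice es2 es)⟩
      | choice es2 =>
        have IHv : ∀ e ∈ es, ∀ v2, (e.1, v2) ∈ es2 → GS e.2 v2 ∧ LS e.2 v2 := by
          intro e he v2 hv2
          have s1 := size_mem_choice he
          have s2 := size_mem_choice hv2
          simp only at s2
          exact IHn e.2 v2 (by omega) (wf_choice_mem h1 he) (wf_choice_mem h2 hv2)
        exact ⟨GS_choice_choice h1 h2 (fun e he v2 hv2 => (IHv e he v2 hv2).1),
               LS_choice_choice h1 h2 (fun e he v2 hv2 => (IHv e he v2 hv2).2)⟩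

theorem GS_all {t1 t2 : GTerm σ} (h1 : WF t1) (h2 : WF t2) : GS t1 t2 :=
  (GS_and_LS (sizeOf t1 + sizeOf t2) t1 t2 le_rfl h1 h2).1

theorem LS_all {t1 t2 : GTerm σ} (h1 : WF t1) (h2 : WF t2) : LS t1 t2 :=
  (GS_and_LS (sizeOf t1 + sizeOf t2) t1 t2 le_rfl h1 h2).2

end Main
section Final
variable {σ : Type}

lemma none_le_up {t : GTerm σ} (h : IsUp t) : Sen (.choice []) t := by
  cases t with
  | choice es => exact .noneBot es
  | sym s => simp [IsUp] at h
  | tuple ts => simp [IsUp] at h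
  | record es => simp [IsUp] at h

lemma ule_top (x : Option (UT σ)) : ule x none := by
  cases x <;> trivial

theorem meet_join_semilattices' {σ : Type} :
    (∀ x y : Option (DT σ), ∃ g : Option (DT σ),
        dle g x ∧ dle g y ∧ (∀ z, dle z x → dle z y → dle z g) ∧
        (dle x y ↔ g = x)) ∧
    (∀ x : Option (DT σ), dle x (some (nilD σ))) ∧
    (∀ x y : Option (UT σ), ∃ l : Option (UT σ),
        ule x l ∧ ule y l ∧ (∀ z, ule x z → ule y z → ule l z) ∧
        (ule x y ↔ l = y)) ∧
    (∀ x : Option (UT σ), ule (some (noneU σ)) x) := by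
  refine ⟨?_, ?_, ?_, ?_⟩
  · -- meets
    intro x y
    match x, y with
    | none, y =>
      exact ⟨none, trivial, trivial, fun z hz _ => hz, by
        constructor
        · intro _; rfl
        · intro _; trivial⟩
    | some a, none =>
      refine ⟨none, trivial, trivial, fun z _ hz => hz, ?_⟩
      constructor
      · intro h; exact h.elim
      · intro h; exact (by cases h)
    | some a, some b =>
      by_cases hxy : Sen a.1 b.1
      · refine ⟨some a, ?_, ?_, fun z hz _ => hz, fun _ => rfl, fun _ => hxy⟩
        · exact Sen.refl _
        · exact hxy
      · rcases GS_all a.2.1 b.2.1 with ⟨g, hw, hs1, hs2, hu⟩ | hr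
        · have hd : IsDown g := sen_down hs1 a.2.2
          refine ⟨some (⟨g, hw, hd⟩ : DT σ), hs1, hs2, ?_, ?_⟩
          · intro z hz1 hz2
            match z with
            | none => trivial
            | some c => exact hu c.1 c.2.1 hz1 hz2
          · constructor
            · intro h; exact absurd h hxy
            · intro h
              have h2 := Option.some.inj h
              have hval : g = a.1 := congrArg Subtype.val h2
              rw [hval] at hs2
              exact absurd hs2 hxy
        · refine ⟨none, trivial, trivial, ?_, ?_⟩
          · intro z hz1 hz2
            match z with
            | none => trivial
            | some c => exact (hr c.1 c.2.1 hz1 hz2).elim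
          · constructor
            · intro h; exact absurd h hxy
            · intro h; exact (by cases h)
  · -- nil top
    intro x
    match x with
    | none => trivial
    | some a => exact down_le_nil a.2.2
  · -- joins
    intro x y
    match x, y with
    | none, y =>
      refine ⟨none, ule_top _, ule_top _, ?_, ?_⟩
      · intro z hz _
        match z with
        | none => trivial
        | some c => exact hz.elim
      · match y with
        | none => exact ⟨fun _ => rfl, fun _ => trivial⟩
        | some b => exact ⟨fun h => h.elim, fun h => by cases h⟩
    | some a, none =>
      refine ⟨none, ule_top _, ule_top _, ?_, ⟨fun _ => rfl, fun _ => trivial⟩⟩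
      intro z _ hz2
      match z with
      | none => trivial
      | some c => exact hz2.elim
    | some a, some b =>
      by_cases hxy : Sen a.1 b.1
      · exact ⟨some b, hxy, Sen.refl _, fun z _ hz2 => hz2, fun _ => rfl, fun _ => hxy⟩
      · rcases LS_all a.2.1 b.2.1 with ⟨l, hw, hs1, hs2, hu⟩ | hr
        · have hup : IsUp l := sen_up hs1 a.2.2
          refine ⟨some (⟨l, hw, hup⟩ : UT σ), hs1, hs2, ?_, ?_⟩
          · intro z hz1 hz2
            match z with
            | none => trivial
            | some c => exact hu c.1 c.2.1 hz1 hz2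
          · constructor
            · intro h; exact absurd h hxy
            · intro h
              have h2 := Option.some.inj h
              have hval : l = b.1 := congrArg Subtype.val h2
              rw [hval] at hs1
              exact absurd hs1 hxy
        · refine ⟨none, ule_top _, ule_top _, ?_, ?_⟩
          · intro z hz1 hz2
            match z with
            | none => trivial
            | some c => exact (hr c.1 c.2.1 hz1 hz2).elim
          · constructor
            · intro h; exact (hr b.1 b.2.1 h (Sen.refl _)).elim
            · intro h; exact (by cases h)
  · -- none bottom
    intro x
    match x with
    | none => trivial
    | some a => exact none_le_up a.2.2
end Final

/-- In the poset of down-coerced well-formed ground terms with an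
added bottom element, every pair has a greatest lower bound `t1 ⊓ t2`, `nil` is
the top element, and `t1 ⊑ t2` iff `t1 ⊓ t2 = t1`; dually, in the poset of
up-coerced well-formed ground terms with an added top element, every pair has a
least upper bound `t1 ⊔ t2`, `none` is the bottom element, and `t1 ⊑ t2` iff
`t1 ⊔ t2 = t2`. -/
theorem meet_join_semilattices {σ : Type} :
    (∀ x y : Option (DT σ), ∃ g : Option (DT σ),
        dle g x ∧ dle g y ∧ (∀ z, dle z x → dle z y → dle z g) ∧
        (dle x y ↔ g = x)) ∧
    (∀ x : Option (DT σ), dle x (some (nilD σ))) ∧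
    (∀ x y : Option (UT σ), ∃ l : Option (UT σ),
        ule x l ∧ ule y l ∧ (∀ z, ule x z → ule y z → ule l z) ∧
        (ule x y ↔ l = y)) ∧
    (∀ x : Option (UT σ), ule (some (noneU σ)) x) := by
  exact meet_join_semilattices'
end

section
/- Substitution of up-coerced variables is monotone: let t be a term containing no Boolean variables whose t-variables are exactly the up-coerced variables v⃗ = (v1, …, vk), and let s⃗1 = (s1¹, …, sk¹) and s⃗2 = (s1², …, sk²) be vectors of up-coerced well-formed ground terms with si¹ ⊑ si² for every i. Then t[v⃗/s⃗1] ⊑ t[v⃗/s⃗2]. -/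
inductive VTerm (σ V : Type) : Type where
  | sym    : σ → VTerm σ V
  | var    : V → VTerm σ V
  | tuple  : List (VTerm σ V) → VTerm σ V
  | record : List (σ × VTerm σ V) → VTerm σ V
  | choice : List (σ × VTerm σ V) → VTerm σ V

theorem VTerm.sizeOf_lt_of_mem {σ V : Type} [SizeOf σ] [SizeOf V]
    {t : VTerm σ V} {ts : List (VTerm σ V)} (h : t ∈ ts) :
    sizeOf t < 1 + sizeOf ts := by
  have := List.sizeOf_lt_of_mem h
  omega

theorem VTerm.sizeOf_lt_of_mem' {σ V : Type} [SizeOf σ] [SizeOf V]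
    {e : σ × VTerm σ V} {es : List (σ × VTerm σ V)} (h : e ∈ es) :
    sizeOf e.2 < 1 + sizeOf es := by
  have h1 := List.sizeOf_lt_of_mem h
  have h2 : sizeOf e.2 < sizeOf e := by
    obtain ⟨a, b⟩ := e
    simp
  omega

def subst {σ V : Type} (f : V → GTerm σ) : VTerm σ V → GTerm σ
  | .sym s => .sym s
  | .var v => f v
  | .tuple ts => .tuple (ts.attach.map fun t => subst f t.1)
  | .record es => .record (es.attach.map fun e => (e.1.1, subst f e.1.2))
  | .choice es => .choice (es.attach.map fun e => (e.1.1, subst f e.1.2))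
decreasing_by
  · simpa using VTerm.sizeOf_lt_of_mem t.2
  · simpa using VTerm.sizeOf_lt_of_mem' e.2
  · simpa using VTerm.sizeOf_lt_of_mem' e.2

/-- substitution monotonicity, up-coerced case:
let `t` be a term containing no Boolean variables whose t-variables are exactly
the up-coerced variables, and let `s1`, `s2` assign to each of these variables
up-coerced well-formed ground terms with `s1 v ⊑ s2 v` for every variable `v`.
Then `t[v⃗/s⃗1] ⊑ t[v⃗/s⃗2]`. -/
theorem subst_monotone_up {σ V : Type} (t : VTerm σ V)
    (s1 s2 : V → GTerm σ)
    (h1 : ∀ v, WF (s1 v) ∧ IsUp (s1 v))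
    (h2 : ∀ v, WF (s2 v) ∧ IsUp (s2 v))
    (hle : ∀ v, Sen (s1 v) (s2 v)) :
    Sen (subst s1 t) (subst s2 t) := by
  match t with
  | .sym s => rw [subst, subst]; exact Sen.refl _
  | .var v => rw [subst, subst]; exact hle v
  | .tuple ts =>
    rw [subst, subst]
    apply Sen.tuple (by simp)
    intro i hi1 hi2
    have hi : i < ts.length := by simpa using hi1
    have hmem : ts[i] ∈ ts := List.getElem_mem _
    simp only [List.get_eq_getElem, List.getElem_map, List.getElem_attach]
    exact subst_monotone_up (ts[i]'hi) s1 s2 h1 h2 hle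
  | .record es =>
    rw [subst, subst]
    apply Sen.record (by simp) (fun j => ⟨j.1, by simpa using j.2⟩)
    · intro j
      simp only [List.get_eq_getElem, List.getElem_map, List.getElem_attach]
    · intro j
      have hj : j.1 < es.length := by simpa using j.2
      have hmem : es[j.1] ∈ es := List.getElem_mem _
      simp only [List.get_eq_getElem, List.getElem_map, List.getElem_attach]
      exact subst_monotone_up (es[j.1]'hj).2 s1 s2 h1 h2 hle
  | .choice es =>
    rw [subst, subst]
    apply Sen.choice (by simp) (fun j => ⟨j.1, by simpa using j.2⟩)
    · intro j
      simp only [List.get_eq_getElem, List.getElem_map, List.getElem_attach]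
    · intro j
      have hj : j.1 < es.length := by simpa using j.2
      have hmem : es[j.1] ∈ es := List.getElem_mem _
      simp only [List.get_eq_getElem, List.getElem_map, List.getElem_attach]
      exact subst_monotone_up (es[j.1]'hj).2 s1 s2 h1 h2 hle
termination_by sizeOf t
decreasing_by
  · have := List.sizeOf_lt_of_mem hmem; simp only [VTerm.tuple.sizeOf_spec]; omega
  · have h3 := List.sizeOf_lt_of_mem hmem
    have h4 : sizeOf (es[j.1]'hj).2 < sizeOf (es[j.1]'hj) := by
      obtain ⟨a, b⟩ := es[j.1]'hj; simp
    simp only [VTerm.record.sizeOf_spec]; omega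
  · have h3 := List.sizeOf_lt_of_mem hmem
    have h4 : sizeOf (es[j.1]'hj).2 < sizeOf (es[j.1]'hj) := by
      obtain ⟨a, b⟩ := es[j.1]'hj; simp
    simp only [VTerm.choice.sizeOf_spec]; omega
end

section
/- Soundness of the well-formedness constraints WFC: let t be a term whose only variables are b-variables, let f⃗ be the vector of b-variables occurring in t, and let b⃗ be a vector of Boolean values such that every formula in WFC(t) evaluates to true under the assignment f⃗ ↦ b⃗. Then the ground term t[f⃗/b⃗] is well-formed. -/
/-- Guards: Boolean formulas over b-variables. -/
inductive Guard (V : Type) : Type where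
  | tt  : Guard V
  | ff  : Guard V
  | var : V → Guard V
  | and : Guard V → Guard V → Guard V
  | or  : Guard V → Guard V → Guard V
  | imp : Guard V → Guard V → Guard V
  | not : Guard V → Guard V

/-- Evaluation of a guard under an assignment of its b-variables. -/
def Guard.eval {V : Type} (b : V → Bool) : Guard V → Bool
  | .tt => true
  | .ff => false
  | .var v => b v
  | .and g1 g2 => g1.eval b && g2.eval b
  | .or g1 g2 => g1.eval b || g2.eval b
  | .imp g1 g2 => !(g1.eval b) || g2.eval b
  | .not g => !(g.eval b)

/-- Guarded MDL terms whose only variables are b-variables: every element of a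
record or choice carries a guard, and a switch is a collection of guarded
unlabeled alternatives. -/
inductive BTm (σ V : Type) : Type where
  | sym    : σ → BTm σ V
  | tuple  : List (BTm σ V) → BTm σ V
  | record : List (σ × Guard V × BTm σ V) → BTm σ V
  | choice : List (σ × Guard V × BTm σ V) → BTm σ V
  | switch : List (Guard V × BTm σ V) → BTm σ V

/-- Ground guarded terms: all guards are evaluated to Boolean values. -/
inductive BG (σ : Type) : Type where
  | sym    : σ → BG σ
  | tuple  : List (BG σ) → BG σ
  | record : List (σ × Bool × BG σ) → BG σ
  | choice : List (σ × Bool × BG σ) → BG σ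
  | switch : List (Bool × BG σ) → BG σ

theorem BTm.sizeOf_lt_of_mem {σ V : Type} [SizeOf σ] [SizeOf V]
    {t : BTm σ V} {ts : List (BTm σ V)} (h : t ∈ ts) :
    sizeOf t < 1 + sizeOf ts := by
  have := List.sizeOf_lt_of_mem h
  omega

theorem BTm.sizeOf_lt_of_mem' {σ V : Type} [SizeOf σ] [SizeOf V]
    {e : σ × Guard V × BTm σ V} {es : List (σ × Guard V × BTm σ V)}
    (h : e ∈ es) : sizeOf e.2.2 < 1 + sizeOf es := by
  have h1 := List.sizeOf_lt_of_mem h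
  have h2 : sizeOf e.2.2 < sizeOf e := by
    obtain ⟨a, b, c⟩ := e
    simp
    omega
  omega

theorem BTm.sizeOf_lt_of_mem'' {σ V : Type} [SizeOf σ] [SizeOf V]
    {e : Guard V × BTm σ V} {bs : List (Guard V × BTm σ V)}
    (h : e ∈ bs) : sizeOf e.2 < 1 + sizeOf bs := by
  have h1 := List.sizeOf_lt_of_mem h
  have h2 : sizeOf e.2 < sizeOf e := by
    obtain ⟨a, b⟩ := e
    simp
  omega

/-- `t[f⃗/b⃗]`: simultaneously replace the b-variables by Boolean values and
evaluate all guards. -/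
def beval {σ V : Type} (b : V → Bool) : BTm σ V → BG σ
  | .sym s => .sym s
  | .tuple ts => .tuple (ts.attach.map fun t => beval b t.1)
  | .record es =>
      .record (es.attach.map fun e => (e.1.1, e.1.2.1.eval b, beval b e.1.2.2))
  | .choice es =>
      .choice (es.attach.map fun e => (e.1.1, e.1.2.1.eval b, beval b e.1.2.2))
  | .switch bs =>
      .switch (bs.attach.map fun e => (e.1.1.eval b, beval b e.1.2))
decreasing_by
  · simpa using BTm.sizeOf_lt_of_mem t.2
  · simpa using BTm.sizeOf_lt_of_mem' e.2
  · simpa using BTm.sizeOf_lt_of_mem' e.2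
  · simpa using BTm.sizeOf_lt_of_mem'' e.2

/-- Well-formedness of ground guarded terms: a symbol; a tuple of well-formed
terms; a record or choice in which any two elements with true guards have
distinct labels and every subterm with a true guard is well-formed; a switch
with exactly one true guard whose corresponding subterm is well-formed. -/
inductive WFG {σ : Type} : BG σ → Prop where
  | sym (s : σ) : WFG (.sym s)
  | tuple {ts : List (BG σ)} (h : ∀ t ∈ ts, WFG t) : WFG (.tuple ts)
  | record {es : List (σ × Bool × BG σ)}
      (hdup : ∀ (i j : Fin es.length), i ≠ j →
        (es.get i).2.1 = true → (es.get j).2.1 = true →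
        (es.get i).1 ≠ (es.get j).1)
      (h : ∀ e ∈ es, e.2.1 = true → WFG e.2.2) : WFG (.record es)
  | choice {es : List (σ × Bool × BG σ)}
      (hdup : ∀ (i j : Fin es.length), i ≠ j →
        (es.get i).2.1 = true → (es.get j).2.1 = true →
        (es.get i).1 ≠ (es.get j).1)
      (h : ∀ e ∈ es, e.2.1 = true → WFG e.2.2) : WFG (.choice es)
  | switch {bs : List (Bool × BG σ)}
      (hone : (bs.filter fun e => e.1).length = 1)
      (h : ∀ e ∈ bs, e.1 = true → WFG e.2) : WFG (.switch bs)

/-- `g ∈ WFC(t)`: the set of Boolean well-formedness constraints of `t`. -/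
inductive InWFC {σ V : Type} : BTm σ V → Guard V → Prop where
  /-- a tuple collects the constraints of its components -/
  | tuple {ts : List (BTm σ V)} {t : BTm σ V} {g : Guard V} :
      t ∈ ts → InWFC t g → InWFC (.tuple ts) g
  /-- `¬(gi ∧ gj)` for distinct record elements with equal labels -/
  | recordDup {es : List (σ × Guard V × BTm σ V)} (i j : Fin es.length) :
      i ≠ j → (es.get i).1 = (es.get j).1 →
      InWFC (.record es) (.not (.and (es.get i).2.1 (es.get j).2.1))
  /-- `gi → g` for `g` a constraint of a record element's subterm -/
  | recordNest {es : List (σ × Guard V × BTm σ V)}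
      {e : σ × Guard V × BTm σ V} {g : Guard V} :
      e ∈ es → InWFC e.2.2 g → InWFC (.record es) (.imp e.2.1 g)
  /-- `¬(gi ∧ gj)` for distinct choice elements with equal labels -/
  | choiceDup {es : List (σ × Guard V × BTm σ V)} (i j : Fin es.length) :
      i ≠ j → (es.get i).1 = (es.get j).1 →
      InWFC (.choice es) (.not (.and (es.get i).2.1 (es.get j).2.1))
  /-- `gi → g` for `g` a constraint of a choice element's subterm -/
  | choiceNest {es : List (σ × Guard V × BTm σ V)}
      {e : σ × Guard V × BTm σ V} {g : Guard V} :
      e ∈ es → InWFC e.2.2 g → InWFC (.choice es) (.imp e.2.1 g)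
  /-- `¬(gi ∧ gj)` for distinct switch alternatives -/
  | switchExcl {bs : List (Guard V × BTm σ V)} (i j : Fin bs.length) :
      i ≠ j → InWFC (.switch bs) (.not (.and (bs.get i).1 (bs.get j).1))
  /-- `g1 ∨ … ∨ gk` for a switch -/
  | switchCover {bs : List (Guard V × BTm σ V)} :
      InWFC (.switch bs) (bs.foldr (fun e g => .or e.1 g) .ff)
  /-- `gi → g` for `g` a constraint of a switch alternative -/
  | switchNest {bs : List (Guard V × BTm σ V)}
      {e : Guard V × BTm σ V} {g : Guard V} :
      e ∈ bs → InWFC e.2 g → InWFC (.switch bs) (.imp e.1 g)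

theorem filter_len_one {α : Type*} (p : α → Bool) (l : List α)
    (h1 : ∃ x ∈ l, p x = true)
    (h2 : ∀ i j : Fin l.length, i ≠ j → p (l.get i) = true → p (l.get j) = true → False) :
    (l.filter p).length = 1 := by
  induction l with
  | nil => simp at h1
  | cons a l ih =>
    by_cases hpa : p a = true
    · have hnil : l.filter p = [] := by
        rw [List.filter_eq_nil_iff]
        intro x hx hpx
        obtain ⟨i, hi, hix⟩ := List.mem_iff_getElem.mp hx
        exact h2 ⟨0, by simp⟩ ⟨i+1, by simp; omega⟩ (by simp [Fin.ext_iff])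
          (by simpa) (by simp [hix]; exact hpx)
      simp [List.filter_cons, hpa, hnil]
    · have h1' : ∃ x ∈ l, p x = true := by
        obtain ⟨x, hx, hpx⟩ := h1
        rcases List.mem_cons.mp hx with rfl | hx
        · exact absurd hpx hpa
        · exact ⟨x, hx, hpx⟩
      have h2' : ∀ i j : Fin l.length, i ≠ j → p (l.get i) = true → p (l.get j) = true → False := by
        intro i j hij hi hj
        refine h2 ⟨i+1, by simp⟩ ⟨j+1, by simp⟩ ?_ ?_ ?_
        simp only [ne_eq, Fin.mk.injEq, add_left_inj]
        intro hh
        exact hij (Fin.ext hh)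
        · simpa using hi
        · simpa using hj
      simpa [List.filter_cons, hpa] using ih h1' h2'

theorem cover_ex {σ V : Type} (b : V → Bool) (bs : List (Guard V × BTm σ V))
    (h : (bs.foldr (fun e g => Guard.or e.1 g) Guard.ff).eval b = true) :
    ∃ e ∈ bs, e.1.eval b = true := by
  induction bs with
  | nil => simp [Guard.eval] at h
  | cons a l ih =>
    simp only [List.foldr_cons, Guard.eval, Bool.or_eq_true] at h
    rcases h with h | h
    · exact ⟨a, by simp, h⟩
    · obtain ⟨e, he, hh⟩ := ih h
      exact ⟨e, by simp [he], hh⟩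

/-- soundness of the well-formedness constraints WFC: let `t`
be a term whose only variables are b-variables and let `b⃗` be an assignment of
Boolean values to them such that every formula in `WFC(t)` evaluates to true.
Then the ground term `t[f⃗/b⃗]` is well-formed. -/
theorem wfc_sound {σ V : Type} (t : BTm σ V) (b : V → Bool)
    (h : ∀ g : Guard V, InWFC t g → g.eval b = true) :
    WFG (beval b t) := by
  induction t using beval.induct with
  | case1 s => rw [beval]; exact WFG.sym s
  | case2 ts ih =>
    rw [beval]
    refine WFG.tuple ?_
    intro t' ht'
    simp only [List.mem_map, List.mem_attach, true_and, Subtype.exists] at ht'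
    obtain ⟨t0, ht0, rfl⟩ := ht'
    exact ih ⟨t0, ht0⟩ (fun g hg => h g (InWFC.tuple ht0 hg))
  | case3 es ih =>
    rw [beval]
    refine WFG.record ?_ ?_
    · intro i j hij hi hj
      simp only [List.get_eq_getElem, List.getElem_map, List.getElem_attach] at hi hj ⊢
      intro hlab
      have key := h _ (InWFC.recordDup ⟨i.val, by simpa using i.isLt⟩
        ⟨j.val, by simpa using j.isLt⟩
        (by simp only [ne_eq, Fin.mk.injEq]; exact fun hh => hij (Fin.ext (by simpa using hh)))
        (by simpa using hlab))
      simp [Guard.eval, hi, hj] at key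
    · intro e he htrue
      simp only [List.mem_map, List.mem_attach, true_and, Subtype.exists] at he
      obtain ⟨e0, he0, rfl⟩ := he
      simp only at htrue
      refine ih ⟨e0, he0⟩ (fun g hg => ?_)
      have key := h _ (InWFC.recordNest he0 hg)
      simpa [Guard.eval, htrue] using key
  | case4 es ih =>
    rw [beval]
    refine WFG.choice ?_ ?_
    · intro i j hij hi hj
      simp only [List.get_eq_getElem, List.getElem_map, List.getElem_attach] at hi hj ⊢
      intro hlab
      have key := h _ (InWFC.choiceDup ⟨i.val, by simpa using i.isLt⟩
        ⟨j.val, by simpa using j.isLt⟩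
        (by simp only [ne_eq, Fin.mk.injEq]; exact fun hh => hij (Fin.ext (by simpa using hh)))
        (by simpa using hlab))
      simp [Guard.eval, hi, hj] at key
    · intro e he htrue
      simp only [List.mem_map, List.mem_attach, true_and, Subtype.exists] at he
      obtain ⟨e0, he0, rfl⟩ := he
      simp only at htrue
      refine ih ⟨e0, he0⟩ (fun g hg => ?_)
      have key := h _ (InWFC.choiceNest he0 hg)
      simpa [Guard.eval, htrue] using key
  | case5 bs ih =>
    rw [beval]
    refine WFG.switch ?_ ?_
    · refine filter_len_one _ _ ?_ ?_
      · have hc := h _ (InWFC.switchCover (bs := bs))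
        obtain ⟨e0, he0, hte⟩ := cover_ex b bs hc
        exact ⟨(e0.1.eval b, beval b e0.2),
          List.mem_map_of_mem (List.mem_attach _ ⟨e0, he0⟩), hte⟩
      · intro i j hij hi hj
        simp only [List.get_eq_getElem, List.getElem_map, List.getElem_attach] at hi hj
        have key := h _ (InWFC.switchExcl ⟨i.val, by simpa using i.isLt⟩
          ⟨j.val, by simpa using j.isLt⟩
          (by simp only [ne_eq, Fin.mk.injEq]; exact fun hh => hij (Fin.ext (by simpa using hh))))
        simp [Guard.eval, hi, hj] at key
    · intro e he htrue
      simp only [List.mem_map, List.mem_attach, true_and, Subtype.exists] at he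
      obtain ⟨e0, he0, rfl⟩ := he
      simp only at htrue
      refine ih ⟨e0, he0⟩ (fun g hg => ?_)
      have key := h _ (InWFC.switchNest he0 hg)
      simpa [Guard.eval, htrue] using key
end
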